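/- arXiv:1705.00568 — 3 statements merged into one kernel-verified Lean document; each statement's English description precedes it below -/
import Mathlib

section
/- The limit lim_{N→∞} N² · ∫₀^π tan²(t/2) · (N/π) · (1 - t/π)^{N-1} dt = π²/2 holds. -/
open Real MeasureTheory intervalIntegral Filter

/-- The rescaled integrand. -/
noncomputable def tanGapG (M : ℕ) (s : ℝ) : ℝ :=
  (M : ℝ) ^ 2 * Real.tan (Real.pi * s / (2 * M)) ^ 2 * (1 - s / M) ^ (M - 1)

set_option maxHeartbeats 1000000 in
lemma tanGapG_bound {M : ℕ} (hM : 6 ≤ M) {s : ℝ} (hs : 0 < s) :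
    ‖(Set.Ioc (0:ℝ) (M:ℝ)).indicator (tanGapG M) s‖ ≤ 16 * Real.pi ^ 2 * Real.exp (-s / 4) := by
  have hπ := Real.pi_pos
  have hM0 : (0:ℝ) < M := Nat.cast_pos.mpr (by omega)
  have hM6 : (6:ℝ) ≤ M := by exact_mod_cast hM
  by_cases hmem : s ∈ Set.Ioc (0:ℝ) (M:ℝ)
  · rw [Set.indicator_of_mem hmem]
    obtain ⟨hs0, hsM⟩ := hmem
    rcases eq_or_lt_of_le hsM with heq | hlt
    · have hx : Real.pi * s / (2 * M) = Real.pi / 2 := by rw [heq]; field_simp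
      unfold tanGapG
      rw [hx, Real.tan_pi_div_two]
      rw [show ((M:ℝ)^2 * (0:ℝ)^2 * (1 - s/M)^(M-1)) = 0 by ring, norm_zero]
      positivity
    · -- 0 < s < M
      set x := Real.pi * s / (2 * M) with hxdef
      have hx0 : 0 < x := by positivity
      have hx2 : x < Real.pi / 2 := by
        rw [hxdef, div_lt_div_iff₀ (by positivity) (by norm_num)]
        nlinarith
    -- cos lower bound
      have hcos : 1 - s / M ≤ Real.cos x := by
        have h := Real.one_sub_mul_le_cos hx0.le hx2.le
        have : 2 / Real.pi * x = s / M := by rw [hxdef]; field_simp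
        linarith [this ▸ h]
      have h1sM : 0 < 1 - s / M := by
        have : s / M < 1 := (div_lt_one hM0).mpr hlt
        linarith
      have htan : Real.tan x ≤ x / (1 - s / M) := by
        rw [Real.tan_eq_sin_div_cos]
        exact div_le_div₀ hx0.le (Real.sin_le hx0.le) h1sM hcos
      have htan0 : 0 ≤ Real.tan x := Real.tan_nonneg_of_nonneg_of_le_pi_div_two hx0.le hx2.le
      -- (1-s/M)^(M-3) ≤ exp(-(s/2))
      have hexp1 : (1 - s / M : ℝ) ≤ Real.exp (-(s / M)) := by
        have := Real.add_one_le_exp (-(s / M)); linarith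
      have hcast : ((M - 3 : ℕ) : ℝ) = (M : ℝ) - 3 := by
        rw [Nat.cast_sub (by omega)]; norm_num
      have hpow : (1 - s / M) ^ (M - 3) ≤ Real.exp (-(s / 2)) := by
        calc (1 - s / M) ^ (M - 3) ≤ (Real.exp (-(s / M))) ^ (M - 3) :=
              pow_le_pow_left₀ h1sM.le hexp1 _
          _ = Real.exp (((M - 3 : ℕ) : ℝ) * (-(s / M))) := by rw [← Real.exp_nat_mul]
          _ ≤ Real.exp (-(s / 2)) := by
              apply Real.exp_le_exp.mpr
              rw [hcast]
              rw [show ((M:ℝ) - 3) * (-(s / M)) = -((((M:ℝ) - 3) * s) / M) by ring,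
                neg_le_neg_iff, div_le_div_iff₀ (by norm_num) hM0]
              nlinarith
      have hsplit : (1 - s / M) ^ (M - 1) = (1 - s / M) ^ (M - 3) * (1 - s / M) ^ 2 := by
        rw [← pow_add]; congr 1; omega
      -- main term bound
      have h1 : Real.tan x * (1 - s / M) ≤ x := by
        calc Real.tan x * (1 - s / M) ≤ (x / (1 - s / M)) * (1 - s / M) := by
              exact mul_le_mul_of_nonneg_right htan h1sM.le
          _ = x := div_mul_cancel₀ x h1sM.ne'
      have hMx : (M : ℝ) * x = Real.pi * s / 2 := by rw [hxdef]; field_simp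
      have h2 : (M : ℝ) * (Real.tan x * (1 - s / M)) ≤ Real.pi * s / 2 := by
        calc (M : ℝ) * (Real.tan x * (1 - s / M)) ≤ (M : ℝ) * x :=
              mul_le_mul_of_nonneg_left h1 hM0.le
          _ = Real.pi * s / 2 := hMx
      have hnn : 0 ≤ (M:ℝ) * (Real.tan x * (1 - s / M)) :=
        mul_nonneg hM0.le (mul_nonneg htan0 h1sM.le)
      have hterm : (M:ℝ)^2 * Real.tan x ^ 2 * (1 - s / M)^2 ≤ Real.pi^2 / 4 * s^2 := by
        calc (M:ℝ)^2 * Real.tan x ^ 2 * (1 - s / M)^2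
            = ((M:ℝ) * (Real.tan x * (1 - s / M))) * ((M:ℝ) * (Real.tan x * (1 - s / M))) := by
              ring
          _ ≤ (Real.pi * s / 2) * (Real.pi * s / 2) := mul_self_le_mul_self hnn h2
          _ = Real.pi^2 / 4 * s^2 := by ring
      have hG : tanGapG M s ≤ Real.pi^2 / 4 * s^2 * Real.exp (-(s/2)) := by
        unfold tanGapG
        rw [← hxdef, hsplit]
        calc (M:ℝ)^2 * Real.tan x ^2 * ((1 - s/M)^(M-3) * (1 - s/M)^2)
            = ((M:ℝ)^2 * Real.tan x ^2 * (1 - s/M)^2) * (1 - s/M)^(M-3) := by ring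
          _ ≤ (Real.pi^2/4 * s^2) * Real.exp (-(s/2)) := by
              apply mul_le_mul hterm hpow (pow_nonneg h1sM.le _) (by positivity)
      have hGnn : 0 ≤ tanGapG M s := by
        unfold tanGapG
        exact mul_nonneg (mul_nonneg (by positivity) (sq_nonneg _)) (pow_nonneg h1sM.le _)
      rw [Real.norm_eq_abs, abs_of_nonneg hGnn]
      refine hG.trans ?_
      have hs64 : s^2 ≤ 64 * Real.exp (s/4) := by
        have h := Real.add_one_le_exp (s/8)
        have h2 : (s/8 + 1)^2 ≤ Real.exp (s/8)^2 := by nlinarith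
        have h3 : Real.exp (s/8)^2 = Real.exp (s/4) := by
          rw [sq, ← Real.exp_add]; congr 1; ring
        rw [h3] at h2
        nlinarith [h2, hs.le]
      have he : Real.exp (s/4) * Real.exp (-(s/2)) = Real.exp (-s/4) := by
        rw [← Real.exp_add]; congr 1; ring
      calc Real.pi^2/4 * s^2 * Real.exp (-(s/2))
          ≤ Real.pi^2/4 * (64 * Real.exp (s/4)) * Real.exp (-(s/2)) := by
            gcongr
        _ = 16 * Real.pi^2 * (Real.exp (s/4) * Real.exp (-(s/2))) := by ring
        _ = 16 * Real.pi^2 * Real.exp (-s/4) := by rw [he]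
  · rw [Set.indicator_of_notMem hmem, norm_zero]
    positivity

lemma tanGapG_tendsto {s : ℝ} (hs : 0 < s) :
    Tendsto (fun M : ℕ => (Set.Ioc (0:ℝ) (M:ℝ)).indicator (tanGapG M) s) atTop
      (nhds (Real.pi ^ 2 / 4 * s ^ 2 * Real.exp (-s))) := by
  have hπ := Real.pi_pos
  -- tan y / y → 1
  have hd : HasDerivAt Real.tan 1 0 := by
    have h := Real.hasDerivAt_tan (x := 0) (by rw [Real.cos_zero]; norm_num)
    simpa using h
  have hslope := hasDerivAt_iff_tendsto_slope.mp hd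
  have hxlim : Tendsto (fun M : ℕ => Real.pi * s / (2 * M)) atTop (nhdsWithin 0 {(0:ℝ)}ᶜ) := by
    apply tendsto_nhdsWithin_of_tendsto_nhds_of_eventually_within
    · have heq : (fun M : ℕ => Real.pi * s / (2 * M)) = fun M : ℕ => (Real.pi * s / 2) / M := by
        funext M; ring
      rw [heq]
      exact tendsto_const_div_atTop_nhds_zero_nat _
    · filter_upwards [eventually_gt_atTop 0] with M hM
      have hMpos : (0:ℝ) < M := Nat.cast_pos.mpr hM
      have : (0:ℝ) < Real.pi * s / (2 * M) := by positivity
      simpa using this.ne'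
  have hlim1 : Tendsto (fun M : ℕ =>
      Real.tan (Real.pi * s / (2 * M)) / (Real.pi * s / (2 * M))) atTop (nhds 1) := by
    have h := hslope.comp hxlim
    have heq : (slope Real.tan 0 ∘ fun M : ℕ => Real.pi * s / (2 * M))
        = fun M : ℕ => Real.tan (Real.pi * s / (2 * M)) / (Real.pi * s / (2 * M)) := by
      funext M
      simp [Function.comp, slope_def_field, Real.tan_zero]
    rwa [heq] at h
  have hlim2 : Tendsto (fun M : ℕ => (1 - s / M) ^ M) atTop (nhds (Real.exp (-s))) := by
    have h := Real.tendsto_one_add_div_pow_exp (-s)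
    simpa [sub_eq_add_neg, neg_div] using h
  have hlim3 : Tendsto (fun M : ℕ => (1 - s / M : ℝ)) atTop (nhds 1) := by
    have h : Tendsto (fun M : ℕ => s / (M:ℝ)) atTop (nhds 0) :=
      tendsto_const_div_atTop_nhds_zero_nat s
    simpa using tendsto_const_nhds.sub h
  have hcomb : Tendsto (fun M : ℕ =>
      ((Real.pi * s / 2) * (Real.tan (Real.pi * s / (2 * M)) / (Real.pi * s / (2 * M)))) ^ 2
        * ((1 - s / M) ^ M / (1 - s / M))) atTop
      (nhds (((Real.pi * s / 2) * 1) ^ 2 * (Real.exp (-s) / 1))) :=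
    ((hlim1.const_mul _).pow 2).mul (hlim2.div hlim3 one_ne_zero)
  rw [show ((Real.pi * s / 2) * 1) ^ 2 * (Real.exp (-s) / 1)
      = Real.pi ^ 2 / 4 * s ^ 2 * Real.exp (-s) by ring] at hcomb
  refine hcomb.congr' ?_
  filter_upwards [eventually_gt_atTop (⌈s⌉₊ + 1)] with M hM
  have hsM : s < M := by
    calc s ≤ (⌈s⌉₊ : ℝ) := Nat.le_ceil s
      _ < M := by exact_mod_cast Nat.lt_of_succ_lt hM
  have hMpos : (0:ℝ) < M := lt_trans hs hsM
  have hM0 : (M:ℝ) ≠ 0 := hMpos.ne'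
  have hx0 : (0:ℝ) < Real.pi * s / (2 * M) := by positivity
  have h1sM : (0:ℝ) < 1 - s / M := by
    have : s / M < 1 := (div_lt_one hMpos).mpr hsM
    linarith
  rw [Set.indicator_of_mem (Set.mem_Ioc.mpr ⟨hs, hsM.le⟩)]
  unfold tanGapG
  have hpow : (1 - s / M) ^ (M - 1) = (1 - s / M) ^ M / (1 - s / M) := by
    rw [pow_sub₀ _ h1sM.ne' (by omega : 1 ≤ M), pow_one, ← div_eq_mul_inv]
  have hsq : ((Real.pi * s / 2) * (Real.tan (Real.pi * s / (2 * M)) / (Real.pi * s / (2 * M))))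
      = (M:ℝ) * Real.tan (Real.pi * s / (2 * M)) := by
    field_simp
  rw [hsq, hpow]
  ring

lemma tanGapG_integral_eq (N : ℕ) (hN : 1 ≤ N) :
    (N : ℝ) ^ 2 *
        ∫ t in (0:ℝ)..Real.pi,
          Real.tan (t / 2) ^ 2 * ((N : ℝ) / Real.pi) * (1 - t / Real.pi) ^ (N - 1)
      = ∫ s in Set.Ioi (0:ℝ), (Set.Ioc (0:ℝ) (N:ℝ)).indicator (tanGapG N) s := by
  have hπ := Real.pi_pos
  have hN0 : (N:ℝ) ≠ 0 := Nat.cast_ne_zero.mpr (by omega)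
  have hNpos : (0:ℝ) < N := by positivity
  set f : ℝ → ℝ := fun t => Real.tan (t/2)^2 * ((N:ℝ)/Real.pi) * (1 - t/Real.pi)^(N-1) with hf
  have hc : (Real.pi / N : ℝ) ≠ 0 := by positivity
  have hsub := intervalIntegral.integral_comp_mul_right (a := 0) (b := (N:ℝ)) f hc
  rw [zero_mul, show (N:ℝ) * (Real.pi/N) = Real.pi by field_simp] at hsub
  have h2 : (∫ t in (0:ℝ)..Real.pi, f t)
      = (Real.pi/N) * ∫ x in (0:ℝ)..(N:ℝ), f (x * (Real.pi/N)) := by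
    rw [hsub, smul_eq_mul, ← mul_assoc, mul_inv_cancel₀ hc, one_mul]
  calc (N:ℝ)^2 * ∫ t in (0:ℝ)..Real.pi, f t
      = ((N:ℝ)^2 * (Real.pi/N)) * ∫ x in (0:ℝ)..(N:ℝ), f (x * (Real.pi/N)) := by
        rw [h2]; ring
    _ = ∫ x in (0:ℝ)..(N:ℝ), ((N:ℝ)^2 * (Real.pi/N)) * f (x * (Real.pi/N)) := by
        rw [intervalIntegral.integral_const_mul]
    _ = ∫ x in (0:ℝ)..(N:ℝ), tanGapG N x := by
        apply intervalIntegral.integral_congr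
        intro x _
        show ((N:ℝ)^2 * (Real.pi/N)) * f (x * (Real.pi/N)) = tanGapG N x
        rw [hf]
        unfold tanGapG
        have h3 : x * (Real.pi/N) / 2 = Real.pi * x / (2 * N) := by field_simp
        have h4 : 1 - x * (Real.pi/N) / Real.pi = 1 - x / N := by
          congr 1
          field_simp
        simp only [h3, h4]
        field_simp
    _ = ∫ x in Set.Ioc (0:ℝ) (N:ℝ), tanGapG N x :=
        intervalIntegral.integral_of_le (by positivity)
    _ = ∫ s in Set.Ioi (0:ℝ), (Set.Ioc (0:ℝ) (N:ℝ)).indicator (tanGapG N) s := by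
        rw [setIntegral_indicator measurableSet_Ioc,
          Set.inter_eq_self_of_subset_right Set.Ioc_subset_Ioi_self]

lemma limit_integral_eq :
    ∫ s in Set.Ioi (0:ℝ), Real.pi ^ 2 / 4 * s ^ 2 * Real.exp (-s) = Real.pi ^ 2 / 2 := by
  have hG : Real.Gamma 3 = ∫ x in Set.Ioi (0:ℝ), Real.exp (-x) * x ^ ((3:ℝ) - 1) :=
    Real.Gamma_eq_integral (by norm_num)
  have hGval : Real.Gamma 3 = 2 := by
    have h := Real.Gamma_nat_eq_factorial 2
    norm_num [Nat.factorial] at h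
    convert h using 2
    norm_num
  calc ∫ s in Set.Ioi (0:ℝ), Real.pi ^ 2 / 4 * s ^ 2 * Real.exp (-s)
      = ∫ s in Set.Ioi (0:ℝ), Real.pi ^ 2 / 4 * (Real.exp (-s) * s ^ ((3:ℝ) - 1)) := by
        refine setIntegral_congr_fun measurableSet_Ioi fun s hs => ?_
        rw [show ((3:ℝ) - 1) = ((2:ℕ):ℝ) by norm_num, Real.rpow_natCast]
        ring
    _ = Real.pi ^ 2 / 4 * ∫ s in Set.Ioi (0:ℝ), Real.exp (-s) * s ^ ((3:ℝ) - 1) :=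
        MeasureTheory.integral_const_mul _ _
    _ = Real.pi ^ 2 / 2 := by rw [← hG, hGval]; ring

theorem tan_sq_gap_moment_asymptotic :
    Tendsto (fun N : ℕ => (N : ℝ) ^ 2 *
        ∫ t in (0:ℝ)..Real.pi,
          Real.tan (t / 2) ^ 2 * ((N : ℝ) / Real.pi) * (1 - t / Real.pi) ^ (N - 1))
      atTop (nhds (Real.pi ^ 2 / 2)) := by
  have key : Tendsto (fun N : ℕ => ∫ s in Set.Ioi (0:ℝ),
      (Set.Ioc (0:ℝ) (N:ℝ)).indicator (tanGapG N) s) atTop (nhds (Real.pi ^ 2 / 2)) := by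
    rw [← tendsto_add_atTop_iff_nat 6, ← limit_integral_eq]
    apply tendsto_integral_of_dominated_convergence
      (bound := fun s => 16 * Real.pi ^ 2 * Real.exp (-s / 4))
    · intro n
      apply AEStronglyMeasurable.indicator _ measurableSet_Ioc
      apply Measurable.aestronglyMeasurable
      unfold tanGapG
      have htan : Measurable Real.tan := by
        have : Real.tan = fun x => Real.sin x / Real.cos x :=
          funext fun x => Real.tan_eq_sin_div_cos x
        rw [this]; exact Real.measurable_sin.div Real.measurable_cos
      fun_prop
    · exact ((exp_neg_integrableOn_Ioi 0 (by norm_num : (0:ℝ) < 1/4)).congr_fun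
        (fun s _ => by rw [neg_div]; ring_nf) measurableSet_Ioi).const_mul _
    · intro n
      filter_upwards [ae_restrict_mem measurableSet_Ioi] with s hs
      exact tanGapG_bound (by omega) hs
    · filter_upwards [ae_restrict_mem measurableSet_Ioi] with s hs
      exact (tanGapG_tendsto hs).comp (tendsto_add_atTop_nat 6)
  refine key.congr' ?_
  filter_upwards [eventually_ge_atTop 1] with N hN
  exact (tanGapG_integral_eq N hN).symm
end

section
/- The limit lim_{N→∞} N · ∫₀^π tan(t/2) · (N/π) · (1 - t/π)^{N-1} dt = π/2 holds. -/
open Real MeasureTheory intervalIntegral Filter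

-- Step 1: ∫₀^π (1 - t/π)^k dt = π/(k+1)
lemma aux_J (k : ℕ) : ∫ t in (0:ℝ)..Real.pi, (1 - t / Real.pi) ^ k
    = Real.pi / (k + 1) := by
  have hπ : (0:ℝ) < Real.pi := Real.pi_pos
  have h := intervalIntegral.integral_eq_sub_of_hasDerivAt
    (f := fun t : ℝ => -(Real.pi / (k + 1)) * (1 - t / Real.pi) ^ (k + 1))
    (f' := fun t : ℝ => (1 - t / Real.pi) ^ k)
    (a := 0) (b := Real.pi)
    (fun t _ => by
      have h1 : HasDerivAt (fun t : ℝ => 1 - t / Real.pi) (-(1 / Real.pi)) t := by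
        simpa using ((hasDerivAt_id t).div_const Real.pi).const_sub 1
      have h2 := (h1.pow (k + 1)).const_mul (-(Real.pi / (k + 1)))
      convert h2 using 1
      have : ((k:ℝ) + 1) ≠ 0 := by positivity
      · rfl
      · rfl
      rw [Nat.add_sub_cancel]; push_cast
      field_simp)
    (by
      apply Continuous.intervalIntegrable
      continuity)
  rw [h]
  have hp : (1 - Real.pi / Real.pi) = (0:ℝ) := by rw [div_self hπ.ne']; ring
  rw [hp, zero_pow (Nat.succ_ne_zero k)]
  simp

-- Step 2: ∫₀^π t(1 - t/π)^k dt = π²/((k+1)(k+2))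
lemma aux_K (k : ℕ) : ∫ t in (0:ℝ)..Real.pi, t * (1 - t / Real.pi) ^ k
    = Real.pi ^ 2 / ((k + 1) * (k + 2)) := by
  have hπ : (0:ℝ) < Real.pi := Real.pi_pos
  have hsplit : ∀ t : ℝ, t * (1 - t / Real.pi) ^ k
      = Real.pi * (1 - t / Real.pi) ^ k - Real.pi * (1 - t / Real.pi) ^ (k + 1) := by
    intro t
    have : Real.pi * (1 - t / Real.pi) ^ (k+1)
        = (Real.pi - t) * (1 - t / Real.pi) ^ k := by
      rw [pow_succ]
      field_simp
    rw [this]; ring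
  rw [intervalIntegral.integral_congr (g := fun t =>
      Real.pi * (1 - t / Real.pi) ^ k - Real.pi * (1 - t / Real.pi) ^ (k + 1))
      (fun t _ => hsplit t)]
  rw [intervalIntegral.integral_sub, intervalIntegral.integral_const_mul,
      intervalIntegral.integral_const_mul, aux_J, aux_J]
  · push_cast
    have h1 : ((k:ℝ) + 1) ≠ 0 := by positivity
    have h2 : ((k:ℝ) + 2) ≠ 0 := by positivity
    field_simp
    ring
  · exact (Continuous.intervalIntegrable (by continuity) _ _)
  · exact (Continuous.intervalIntegrable (by continuity) _ _)

-- cos bound by the chord: 1 - t/π ≤ cos(t/2) for t ∈ [0, π]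
lemma aux_cos_bound {t : ℝ} (h0 : 0 ≤ t) (h1 : t ≤ Real.pi) :
    1 - t / Real.pi ≤ Real.cos (t / 2) := by
  have hπ : (0:ℝ) < Real.pi := Real.pi_pos
  have hcc := strictConcaveOn_cos_Icc.concaveOn
  have hmem0 : (0:ℝ) ∈ Set.Icc (-(Real.pi/2)) (Real.pi/2) := by
    constructor <;> nlinarith
  have hmem1 : Real.pi/2 ∈ Set.Icc (-(Real.pi/2)) (Real.pi/2) := by
    constructor <;> nlinarith
  have ha : (0:ℝ) ≤ 1 - t / Real.pi := by
    rw [sub_nonneg, div_le_one hπ]; exact h1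
  have hb : (0:ℝ) ≤ t / Real.pi := by positivity
  have hab : (1 - t / Real.pi) + t / Real.pi = 1 := by ring
  have := hcc.2 hmem0 hmem1 ha hb hab
  simp only [smul_eq_mul, mul_zero, zero_add, Real.cos_zero, Real.cos_pi_div_two, mul_one] at this
  have he : t / Real.pi * (Real.pi / 2) = t / 2 := by field_simp
  rw [he] at this
  linarith

lemma aux_tan_upper {t : ℝ} (h0 : 0 ≤ t) (h1 : t ≤ Real.pi) :
    Real.tan (t / 2) * (1 - t / Real.pi) ≤ t / 2 := by
  have hπ : (0:ℝ) < Real.pi := Real.pi_pos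
  rcases eq_or_lt_of_le h1 with rfl | hlt
  · rw [Real.tan_pi_div_two, zero_mul]
    positivity
  · have hcos : 0 < Real.cos (t / 2) :=
      Real.cos_pos_of_mem_Ioo ⟨by nlinarith, by nlinarith⟩
    have hsin : 0 ≤ Real.sin (t / 2) :=
      Real.sin_nonneg_of_nonneg_of_le_pi (by linarith) (by linarith)
    have htan : 0 ≤ Real.tan (t / 2) := by
      rw [Real.tan_eq_sin_div_cos]; positivity
    have hchord := aux_cos_bound h0 h1
    calc Real.tan (t / 2) * (1 - t / Real.pi)
        ≤ Real.tan (t / 2) * Real.cos (t / 2) := by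
          apply mul_le_mul_of_nonneg_left hchord htan
      _ = Real.sin (t / 2) := by
          rw [Real.tan_eq_sin_div_cos]; field_simp
      _ ≤ t / 2 := Real.sin_le (by linarith)

lemma aux_tan_lower {t : ℝ} (h0 : 0 ≤ t) (h1 : t ≤ Real.pi) :
    t / 2 * (1 - t / Real.pi) ≤ Real.tan (t / 2) := by
  have hπ : (0:ℝ) < Real.pi := Real.pi_pos
  rcases eq_or_lt_of_le h1 with rfl | hlt
  · rw [Real.tan_pi_div_two]
    have : 1 - Real.pi / Real.pi = 0 := by rw [div_self hπ.ne']; ring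
    rw [this, mul_zero]
  · rcases eq_or_lt_of_le h0 with rfl | hpos
    · simp
    · have htan : t / 2 < Real.tan (t / 2) :=
        Real.lt_tan (by linarith) (by linarith)
      have hle1 : 1 - t / Real.pi ≤ 1 := by
        have : 0 ≤ t / Real.pi := by positivity
        linarith
      nlinarith

lemma aux_measurable_tan : Measurable Real.tan := by
  have : Real.tan = fun x => Real.sin x / Real.cos x := by
    funext x; exact Real.tan_eq_sin_div_cos x
  rw [this]
  exact Real.measurable_sin.div Real.measurable_cos

lemma aux_integrable (k : ℕ) :
    IntervalIntegrable
      (fun t => Real.tan (t / 2) * (((k:ℝ) + 2) / Real.pi) * (1 - t / Real.pi) ^ (k + 1))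
      volume 0 Real.pi := by
  have hπ : (0:ℝ) < Real.pi := Real.pi_pos
  rw [intervalIntegrable_iff_integrableOn_Ioc_of_le hπ.le]
  have hg : IntegrableOn
      (fun t => t / 2 * (((k:ℝ) + 2) / Real.pi) * (1 - t / Real.pi) ^ k)
      (Set.Ioc 0 Real.pi) volume := by
    apply Continuous.integrableOn_Ioc
    continuity
  apply hg.integrable.mono
  · apply Measurable.aestronglyMeasurable
    apply Measurable.mul
    apply Measurable.mul
    · exact aux_measurable_tan.comp (measurable_id.div_const 2)
    · exact measurable_const
    · exact (measurable_const.sub (measurable_id.div_const _)).pow measurable_const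
  · rw [ae_restrict_iff' measurableSet_Ioc]
    filter_upwards with t ht
    have h0 : 0 ≤ t := le_of_lt ht.1
    have h1 : t ≤ Real.pi := ht.2
    have hb : 0 ≤ 1 - t / Real.pi := by
      rw [sub_nonneg, div_le_one hπ]; exact h1
    have htan : 0 ≤ Real.tan (t / 2) := by
      rcases eq_or_lt_of_le h1 with rfl | hlt
      · rw [Real.tan_pi_div_two]
      · have hcos : 0 < Real.cos (t / 2) :=
          Real.cos_pos_of_mem_Ioo ⟨by nlinarith, by nlinarith⟩
        have hsin : 0 ≤ Real.sin (t / 2) :=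
          Real.sin_nonneg_of_nonneg_of_le_pi (by linarith) (by linarith)
        rw [Real.tan_eq_sin_div_cos]; positivity
    have hkey : Real.tan (t / 2) * (((k:ℝ) + 2) / Real.pi) * (1 - t / Real.pi) ^ (k + 1)
        ≤ t / 2 * (((k:ℝ) + 2) / Real.pi) * (1 - t / Real.pi) ^ k := by
      have := aux_tan_upper h0 h1
      have hpow : (0:ℝ) ≤ (1 - t / Real.pi) ^ k := by positivity
      calc Real.tan (t / 2) * (((k:ℝ) + 2) / Real.pi) * (1 - t / Real.pi) ^ (k + 1)
          = (Real.tan (t / 2) * (1 - t / Real.pi)) * ((1 - t / Real.pi) ^ k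
              * (((k:ℝ) + 2) / Real.pi)) := by ring
        _ ≤ (t / 2) * ((1 - t / Real.pi) ^ k * (((k:ℝ) + 2) / Real.pi)) := by
            apply mul_le_mul_of_nonneg_right this
            positivity
        _ = t / 2 * (((k:ℝ) + 2) / Real.pi) * (1 - t / Real.pi) ^ k := by ring
    rw [Real.norm_eq_abs, Real.norm_eq_abs]
    have hf0 : 0 ≤ Real.tan (t / 2) * (((k:ℝ) + 2) / Real.pi)
        * (1 - t / Real.pi) ^ (k + 1) := by positivity
    have hg0 : 0 ≤ t / 2 * (((k:ℝ) + 2) / Real.pi) * (1 - t / Real.pi) ^ k := by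
      positivity
    rw [abs_of_nonneg hf0, abs_of_nonneg hg0]
    exact hkey

lemma aux_int_le (k : ℕ) :
    (∫ t in (0:ℝ)..Real.pi,
        Real.tan (t / 2) * (((k:ℝ) + 2) / Real.pi) * (1 - t / Real.pi) ^ (k + 1))
      ≤ Real.pi / (2 * ((k:ℝ) + 1)) := by
  have hπ : (0:ℝ) < Real.pi := Real.pi_pos
  have hgint : IntervalIntegrable
      (fun t => t / 2 * (((k:ℝ) + 2) / Real.pi) * (1 - t / Real.pi) ^ k)
      volume 0 Real.pi := Continuous.intervalIntegrable (by continuity) _ _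
  have hmono := intervalIntegral.integral_mono_on (μ := volume) hπ.le
      (aux_integrable k) hgint
      (fun t ht => by
        have := aux_tan_upper ht.1 ht.2
        have hpow : (0:ℝ) ≤ (1 - t / Real.pi) ^ k := by
          have : 0 ≤ 1 - t / Real.pi := by
            rw [sub_nonneg, div_le_one hπ]; exact ht.2
          positivity
        calc Real.tan (t / 2) * (((k:ℝ) + 2) / Real.pi) * (1 - t / Real.pi) ^ (k + 1)
            = (Real.tan (t / 2) * (1 - t / Real.pi)) * ((1 - t / Real.pi) ^ k
                * (((k:ℝ) + 2) / Real.pi)) := by ring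
          _ ≤ (t / 2) * ((1 - t / Real.pi) ^ k * (((k:ℝ) + 2) / Real.pi)) := by
              apply mul_le_mul_of_nonneg_right this
              positivity
          _ = t / 2 * (((k:ℝ) + 2) / Real.pi) * (1 - t / Real.pi) ^ k := by ring)
  refine hmono.trans_eq ?_
  have hcongr : ∀ t ∈ Set.uIcc (0:ℝ) Real.pi,
      t / 2 * (((k:ℝ) + 2) / Real.pi) * (1 - t / Real.pi) ^ k
        = (((k:ℝ) + 2) / (2 * Real.pi)) * (t * (1 - t / Real.pi) ^ k) := by
    intro t _; field_simp
  rw [intervalIntegral.integral_congr hcongr, intervalIntegral.integral_const_mul, aux_K]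
  have h1 : ((k:ℝ) + 1) ≠ 0 := by positivity
  have h2 : ((k:ℝ) + 2) ≠ 0 := by positivity
  field_simp

lemma aux_int_ge (k : ℕ) :
    Real.pi * ((k:ℝ) + 2) / (2 * (((k:ℝ) + 3) * ((k:ℝ) + 4)))
      ≤ ∫ t in (0:ℝ)..Real.pi,
          Real.tan (t / 2) * (((k:ℝ) + 2) / Real.pi) * (1 - t / Real.pi) ^ (k + 1) := by
  have hπ : (0:ℝ) < Real.pi := Real.pi_pos
  have hgint : IntervalIntegrable
      (fun t => (((k:ℝ) + 2) / (2 * Real.pi)) * (t * (1 - t / Real.pi) ^ (k + 2)))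
      volume 0 Real.pi := Continuous.intervalIntegrable (by continuity) _ _
  have hmono := intervalIntegral.integral_mono_on (μ := volume) hπ.le
      hgint (aux_integrable k)
      (fun t ht => by
        have hlow := aux_tan_lower ht.1 ht.2
        have hb : (0:ℝ) ≤ 1 - t / Real.pi := by
          rw [sub_nonneg, div_le_one hπ]; exact ht.2
        have hpow : (0:ℝ) ≤ (1 - t / Real.pi) ^ (k + 1) := by positivity
        calc (((k:ℝ) + 2) / (2 * Real.pi)) * (t * (1 - t / Real.pi) ^ (k + 2))
            = (t / 2 * (1 - t / Real.pi)) * ((1 - t / Real.pi) ^ (k + 1)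
                * (((k:ℝ) + 2) / Real.pi)) := by ring
          _ ≤ Real.tan (t / 2) * ((1 - t / Real.pi) ^ (k + 1)
                * (((k:ℝ) + 2) / Real.pi)) := by
              apply mul_le_mul_of_nonneg_right hlow
              positivity
          _ = Real.tan (t / 2) * (((k:ℝ) + 2) / Real.pi)
                * (1 - t / Real.pi) ^ (k + 1) := by ring)
  refine le_trans (le_of_eq ?_) hmono
  rw [intervalIntegral.integral_const_mul, aux_K]
  have h3 : ((k:ℝ) + 3) ≠ 0 := by positivity
  have h4 : ((k:ℝ) + 4) ≠ 0 := by positivity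
  push_cast
  field_simp
  ring

theorem tan_gap_first_moment_asymptotic :
    Tendsto (fun N : ℕ => (N : ℝ) *
        ∫ t in (0:ℝ)..Real.pi,
          Real.tan (t / 2) * ((N : ℝ) / Real.pi) * (1 - t / Real.pi) ^ (N - 1))
      atTop (nhds (Real.pi / 2)) := by
  have hπ : (0:ℝ) < Real.pi := Real.pi_pos
  set lo : ℕ → ℝ := fun N =>
    Real.pi / 2 * (((N:ℝ) / ((N:ℝ) + 1)) * ((N:ℝ) / ((N:ℝ) + 2))) with hlo_def
  set hi : ℕ → ℝ := fun N => Real.pi / 2 * ((N:ℝ) / ((N:ℝ) + (-1))) with hhi_def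
  have hlo : Tendsto lo atTop (nhds (Real.pi / 2)) := by
    have t1 := tendsto_natCast_div_add_atTop (1:ℝ)
    have t2 := tendsto_natCast_div_add_atTop (2:ℝ)
    have := (tendsto_const_nhds (x := Real.pi / 2) (f := atTop)).mul (t1.mul t2)
    simpa using this
  have hhi : Tendsto hi atTop (nhds (Real.pi / 2)) := by
    have t1 := tendsto_natCast_div_add_atTop (-1:ℝ)
    have := (tendsto_const_nhds (x := Real.pi / 2) (f := atTop)).mul t1
    simpa using this
  apply tendsto_of_tendsto_of_tendsto_of_le_of_le' hlo hhi
  · filter_upwards [eventually_ge_atTop 2] with N hN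
    obtain ⟨k, rfl⟩ := Nat.exists_eq_add_of_le hN
    have hsub : 2 + k - 1 = k + 1 := by omega
    have hcast : ((2 + k : ℕ) : ℝ) = (k:ℝ) + 2 := by push_cast; ring
    rw [hsub, hcast]
    have hge := aux_int_ge k
    have h1 : (0:ℝ) ≤ (k:ℝ) + 2 := by positivity
    have := mul_le_mul_of_nonneg_left hge h1
    refine le_trans (le_of_eq ?_) this
    simp only [hlo_def, hcast]
    have h3 : ((k:ℝ) + 3) ≠ 0 := by positivity
    have h4 : ((k:ℝ) + 4) ≠ 0 := by positivity
    field_simp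
    ring
  · filter_upwards [eventually_ge_atTop 2] with N hN
    obtain ⟨k, rfl⟩ := Nat.exists_eq_add_of_le hN
    have hsub : 2 + k - 1 = k + 1 := by omega
    have hcast : ((2 + k : ℕ) : ℝ) = (k:ℝ) + 2 := by push_cast; ring
    rw [hsub, hcast]
    have hle := aux_int_le k
    have h1 : (0:ℝ) ≤ (k:ℝ) + 2 := by positivity
    have := mul_le_mul_of_nonneg_left hle h1
    refine le_trans this (le_of_eq ?_)
    simp only [hhi_def, hcast]
    have h2 : ((k:ℝ) + 1) ≠ 0 := by positivity
    have h3 : (k:ℝ) + 2 + (-1) ≠ 0 := by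
      have : (k:ℝ) + 2 + (-1) = (k:ℝ) + 1 := by ring
      rw [this]; exact h2
    field_simp
    ring
end

section
/- For every w > 0, the limit lim_{N→∞} N · [ (4w²N)/(9π²) · ∫₀^π tan²(t/2) · (N/π) · (1 - t/π)^{N-1} dt ] = 2w²/9 holds. -/
open Real MeasureTheory intervalIntegral Filter Set Topology

noncomputable def cmmF (N : ℕ) (x : ℝ) : ℝ :=
  Set.indicator (Set.Ioc 0 ((N : ℝ) * Real.pi))
    (fun x => ((N : ℝ) * Real.tan (x / (2 * N))) ^ 2 * (1 - x / (N * Real.pi)) ^ (N - 1)) x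

-- identity lemma
lemma cmm_eq (w : ℝ) (N : ℕ) (hN : 1 ≤ N) :
    (N : ℝ) *
        ((4 * w ^ 2 * (N : ℝ)) / (9 * Real.pi ^ 2) *
          ∫ t in (0:ℝ)..Real.pi,
            Real.tan (t / 2) ^ 2 * ((N : ℝ) / Real.pi) * (1 - t / Real.pi) ^ (N - 1))
      = 4 * w ^ 2 / (9 * Real.pi ^ 3) * ∫ x in Set.Ioi (0:ℝ), cmmF N x := by
  have hπ := Real.pi_pos
  have hN0 : (N : ℝ) ≠ 0 := by positivity
  set g : ℝ → ℝ := fun t => Real.tan (t / 2) ^ 2 * ((N : ℝ) / Real.pi) * (1 - t / Real.pi) ^ (N - 1) with hg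
  have hsub : (∫ x in (0:ℝ)..((N:ℝ) * Real.pi), g (x / N)) = (N : ℝ) • ∫ t in (0:ℝ)..Real.pi, g t := by
    rw [intervalIntegral.integral_comp_div (f := g) (a := 0) (b := (N:ℝ)*Real.pi) hN0]
    rw [zero_div, mul_div_cancel_left₀ _ hN0]
  have hIoi : ∫ x in Set.Ioi (0:ℝ), cmmF N x
      = ∫ x in Set.Ioc (0:ℝ) ((N:ℝ)*Real.pi),
          ((N : ℝ) * Real.tan (x / (2 * N))) ^ 2 * (1 - x / (N * Real.pi)) ^ (N - 1) := by
    rw [show cmmF N = Set.indicator (Set.Ioc 0 ((N : ℝ) * Real.pi))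
      (fun x => ((N : ℝ) * Real.tan (x / (2 * N))) ^ 2 * (1 - x / (N * Real.pi)) ^ (N - 1)) from rfl]
    rw [MeasureTheory.setIntegral_indicator measurableSet_Ioc]
    congr 1
    rw [Set.inter_eq_right.mpr Set.Ioc_subset_Ioi_self]
  have hconv : ∫ x in Set.Ioc (0:ℝ) ((N:ℝ)*Real.pi),
          ((N : ℝ) * Real.tan (x / (2 * N))) ^ 2 * (1 - x / (N * Real.pi)) ^ (N - 1)
      = ∫ x in (0:ℝ)..((N:ℝ)*Real.pi), (Real.pi * N) * g (x / N) := by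
    rw [intervalIntegral.integral_of_le (by positivity)]
    apply MeasureTheory.setIntegral_congr_fun measurableSet_Ioc
    intro x _
    simp only [hg]
    rw [div_div, div_div]
    field_simp
  rw [hIoi, hconv, intervalIntegral.integral_const_mul, hsub, smul_eq_mul]
  field_simp

lemma cmm_tendsto {x : ℝ} (hx : 0 < x) :
    Tendsto (fun N : ℕ => cmmF N x) atTop
      (nhds (x ^ 2 / 4 * Real.exp (-(x / Real.pi)))) := by
  have hπ := Real.pi_pos
  -- part A : N * tan (x/(2N)) → x/2
  have hu : Tendsto (fun N : ℕ => x / (2 * (N:ℝ))) atTop (nhds 0) := by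
    have := tendsto_const_div_atTop_nhds_zero_nat (x / 2)
    refine this.congr (fun N => ?_)
    rw [div_div]
  have hu' : Tendsto (fun N : ℕ => x / (2 * (N:ℝ))) atTop (𝓝[≠] 0) := by
    refine tendsto_nhdsWithin_of_tendsto_nhds_of_eventually_within _ hu ?_
    filter_upwards [eventually_ge_atTop 1] with N hN
    have : (0:ℝ) < N := by exact_mod_cast hN
    have : 0 < x / (2 * (N:ℝ)) := by positivity
    simp [Set.mem_compl_singleton_iff, ne_of_gt this]
  have hder : HasDerivAt Real.tan 1 0 := by
    have := Real.hasDerivAt_tan (x := 0) (by simp)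
    simpa using this
  have hslope : Tendsto (fun y : ℝ => Real.tan y / y) (𝓝[≠] 0) (nhds 1) := by
    have := (hasDerivAt_iff_tendsto_slope).mp hder
    refine this.congr (fun y => ?_)
    simp [slope_def_field]
  have hA : Tendsto (fun N : ℕ => (N : ℝ) * Real.tan (x / (2 * N))) atTop (nhds (x / 2)) := by
    have h1 : Tendsto (fun N : ℕ => x / 2 * (Real.tan (x / (2 * N)) / (x / (2 * N)))) atTop
        (nhds (x / 2 * 1)) := Tendsto.const_mul _ (hslope.comp hu')
    rw [mul_one] at h1
    refine h1.congr' ?_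
    filter_upwards [eventually_ge_atTop 1] with N hN
    have hN0 : (N:ℝ) ≠ 0 := by positivity
    field_simp
  -- part B : (1 - x/(Nπ))^(N-1) → exp(-(x/π))
  have hbase : Tendsto (fun N : ℕ => 1 - x / ((N:ℝ) * Real.pi)) atTop (nhds 1) := by
    have h2 : Tendsto (fun N : ℕ => x / ((N:ℝ) * Real.pi)) atTop (nhds 0) := by
      have := tendsto_const_div_atTop_nhds_zero_nat (x / Real.pi)
      refine this.congr (fun N => ?_)
      rw [div_div, mul_comm]
    have := (tendsto_const_nhds (x := (1:ℝ)) (f := atTop (α := ℕ))).sub h2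
    simpa using this
  have hpow : Tendsto (fun N : ℕ => (1 - x / ((N:ℝ) * Real.pi)) ^ N) atTop
      (nhds (Real.exp (-(x / Real.pi)))) := by
    have := Real.tendsto_one_add_div_pow_exp (-(x / Real.pi))
    refine this.congr (fun N => ?_)
    congr 1
    ring
  have hB : Tendsto (fun N : ℕ => (1 - x / ((N:ℝ) * Real.pi)) ^ (N - 1)) atTop
      (nhds (Real.exp (-(x / Real.pi)))) := by
    have h3 := hpow.div hbase one_ne_zero
    rw [div_one] at h3
    refine h3.congr' ?_
    have hev : ∀ᶠ N : ℕ in atTop, 1 / 2 < 1 - x / ((N:ℝ) * Real.pi) := by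
      exact hbase.eventually (eventually_gt_nhds (by norm_num))
    filter_upwards [hev, eventually_ge_atTop 1] with N h5 hN
    have hne : 1 - x / ((N:ℝ) * Real.pi) ≠ 0 := by linarith
    simp only [Pi.div_apply]
    rw [eq_comm, eq_div_iff hne, ← pow_succ]
    congr 1
    omega
  -- combine
  have hC : Tendsto (fun N : ℕ =>
      ((N : ℝ) * Real.tan (x / (2 * N))) ^ 2 * (1 - x / ((N:ℝ) * Real.pi)) ^ (N - 1)) atTop
      (nhds ((x / 2) ^ 2 * Real.exp (-(x / Real.pi)))) := (hA.pow 2).mul hB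
  have : (x / 2) ^ 2 * Real.exp (-(x / Real.pi)) = x ^ 2 / 4 * Real.exp (-(x / Real.pi)) := by ring
  rw [this] at hC
  refine hC.congr' ?_
  have hev2 : ∀ᶠ N : ℕ in atTop, x ≤ (N:ℝ) * Real.pi := by
    have := tendsto_natCast_atTop_atTop (R := ℝ)
    have h6 : Tendsto (fun N : ℕ => (N:ℝ) * Real.pi) atTop atTop :=
      Tendsto.atTop_mul_const hπ this
    exact h6.eventually_ge_atTop x
  filter_upwards [hev2] with N hN
  rw [eq_comm]
  exact Set.indicator_of_mem (Set.mem_Ioc.mpr ⟨hx, hN⟩) _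

set_option maxHeartbeats 2000000 in
lemma cmm_bound {N : ℕ} (hN : 3 ≤ N) (x : ℝ) :
    ‖cmmF N x‖ ≤ (1 + 512 / Real.pi ^ 4) * (x ^ 2 * Real.exp (-(x / (2 * Real.pi)))) := by
  have hπ := Real.pi_pos
  have hRHS : 0 ≤ (1 + 512 / Real.pi ^ 4) * (x ^ 2 * Real.exp (-(x / (2 * Real.pi)))) := by
    positivity
  by_cases hmem : x ∈ Set.Ioc 0 ((N:ℝ) * Real.pi)
  swap
  · rw [cmmF, Set.indicator_of_notMem hmem]; simpa using hRHS
  obtain ⟨hx0, hxN⟩ := hmem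
  have hN3 : (3:ℝ) ≤ (N:ℝ) := by exact_mod_cast hN
  have hN0 : (0:ℝ) < N := by linarith
  rw [cmmF, Set.indicator_of_mem (Set.mem_Ioc.mpr ⟨hx0, hxN⟩)]
  set z := x / (2 * (N:ℝ)) with hzdef
  clear_value z
  have hz0 : 0 < z := by rw [hzdef]; positivity
  have hzle : z ≤ Real.pi / 2 := by
    rw [hzdef, div_le_div_iff₀ (by positivity) two_pos]
    nlinarith
  have htn : 0 ≤ Real.tan z := Real.tan_nonneg_of_nonneg_of_le_pi_div_two hz0.le hzle
  have hbase0 : 0 ≤ 1 - x / ((N:ℝ) * Real.pi) := by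
    rw [sub_nonneg]
    exact (div_le_one (by positivity)).mpr hxN
  rw [Real.norm_eq_abs, abs_of_nonneg (by positivity)]
  have hsqrt2 : (1:ℝ) ≤ Real.sqrt 2 := by
    nlinarith [Real.sq_sqrt (by norm_num : (0:ℝ) ≤ 2), Real.sqrt_nonneg 2]
  rcases le_or_gt x ((N:ℝ) * Real.pi / 2) with hcase | hcase
  · -- Case 1 : x ≤ Nπ/2
    have hz4 : z ≤ Real.pi / 4 := by
      rw [hzdef, div_le_div_iff₀ (by positivity) (by norm_num : (0:ℝ) < 4)]
      nlinarith
    have hcos : 1/2 ≤ Real.cos z := by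
      have h1 : Real.cos (Real.pi/4) ≤ Real.cos z :=
        Real.cos_le_cos_of_nonneg_of_le_pi hz0.le (by linarith) hz4
      rw [Real.cos_pi_div_four] at h1
      nlinarith
    have htanle : Real.tan z ≤ 2 * z := by
      rw [Real.tan_eq_sin_div_cos, div_le_iff₀ (by linarith)]
      nlinarith [Real.sin_le hz0.le]
    have hNt : (N:ℝ) * Real.tan z ≤ x := by
      have h2 : (N:ℝ) * (2 * z) = x := by rw [hzdef]; field_simp
      nlinarith
    have hsq : ((N:ℝ) * Real.tan z) ^ 2 ≤ x ^ 2 :=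
      pow_le_pow_left₀ (by positivity) hNt 2
    have hbexp : (1 - x / ((N:ℝ) * Real.pi)) ^ (N - 1) ≤ Real.exp (-(x / (2 * Real.pi))) := by
      have h1 : 1 - x / ((N:ℝ) * Real.pi) ≤ Real.exp (-(x / ((N:ℝ) * Real.pi))) := by
        linarith [Real.add_one_le_exp (-(x / ((N:ℝ) * Real.pi)))]
      calc (1 - x / ((N:ℝ) * Real.pi)) ^ (N - 1)
          ≤ Real.exp (-(x / ((N:ℝ) * Real.pi))) ^ (N - 1) := pow_le_pow_left₀ hbase0 h1 _
        _ = Real.exp (((N - 1 : ℕ):ℝ) * (-(x / ((N:ℝ) * Real.pi)))) := by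
            rw [← Real.exp_nat_mul]
        _ ≤ Real.exp (-(x / (2 * Real.pi))) := by
            rw [Real.exp_le_exp, Nat.cast_sub (by omega), Nat.cast_one]
            have e1 : x / ((N:ℝ) * Real.pi) * ((N:ℝ) * Real.pi) = x :=
              div_mul_cancel₀ _ (by positivity)
            have e2 : x / (2 * Real.pi) * (2 * Real.pi) = x :=
              div_mul_cancel₀ _ (by positivity)
            have p1 : 0 < x / ((N:ℝ) * Real.pi) := by positivity
            have p2 : 0 < x / (2 * Real.pi) := by positivity
            nlinarith [e1, e2, p1, p2, mul_pos hN0 hπ]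
    calc ((N:ℝ) * Real.tan z) ^ 2 * (1 - x / ((N:ℝ) * Real.pi)) ^ (N - 1)
        ≤ x ^ 2 * Real.exp (-(x / (2 * Real.pi))) :=
          mul_le_mul hsq hbexp (pow_nonneg hbase0 _) (by positivity)
      _ ≤ (1 + 512 / Real.pi ^ 4) * (x ^ 2 * Real.exp (-(x / (2 * Real.pi)))) := by
          refine le_mul_of_one_le_left (by positivity) ?_
          have : 0 < 512 / Real.pi ^ 4 := by positivity
          linarith
  · -- Case 2 : Nπ/2 < x
    rcases eq_or_lt_of_le hxN with heq | hlt
    · have hzpi : z = Real.pi / 2 := by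
        rw [hzdef, heq, div_eq_div_iff (by positivity) two_ne_zero]; ring
      rw [hzpi, Real.tan_pi_div_two]
      simpa using hRHS
    · set r := 1 - x / ((N:ℝ) * Real.pi) with hrdef
      clear_value r
      have hr0 : 0 < r := by
        rw [hrdef, sub_pos]
        exact (div_lt_one (by positivity)).mpr hlt
      have hr2 : r < 1/2 := by
        have h3 : 1/2 < x / ((N:ℝ) * Real.pi) := by
          rw [lt_div_iff₀ (by positivity)]; nlinarith
        rw [hrdef]; linarith
      set d := Real.pi / 2 - z with hddef
      clear_value d
      have hd0 : 0 < d := by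
        rw [hddef, sub_pos, hzdef, div_lt_div_iff₀ (by positivity) two_pos]
        nlinarith
      have hz4' : Real.pi / 4 < z := by
        rw [hzdef, lt_div_iff₀ (by positivity)]; nlinarith
      have hd4 : d ≤ Real.pi / 4 := by rw [hddef]; linarith
      have hcosd : 1/2 ≤ Real.cos d := by
        have h1 : Real.cos (Real.pi/4) ≤ Real.cos d :=
          Real.cos_le_cos_of_nonneg_of_le_pi hd0.le (by linarith) hd4
        rw [Real.cos_pi_div_four] at h1
        nlinarith
      have hcosd0 : (0:ℝ) < Real.cos d := by linarith
      have htd : d < Real.tan d := Real.lt_tan hd0 (by linarith)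
      have hsin_eq : Real.sin d = Real.tan d * Real.cos d := by
        rw [Real.tan_eq_sin_div_cos, div_mul_cancel₀ _ (ne_of_gt hcosd0)]
      have hsind : d / 2 ≤ Real.sin d := by nlinarith
      have hsd0 : 0 < Real.sin d := by linarith
      have htanz : Real.tan z ≤ 2 / d := by
        have hz_eq : z = Real.pi / 2 - d := by rw [hddef]; ring
        rw [Real.tan_eq_sin_div_cos, hz_eq, Real.sin_pi_div_two_sub,
          Real.cos_pi_div_two_sub, div_le_div_iff₀ hsd0 hd0]
        nlinarith [Real.cos_le_one d]
      have hdval : d = ((N:ℝ) * Real.pi - x) / (2 * N) := by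
        rw [hddef, hzdef]; field_simp
      have hNπx : (N:ℝ) * Real.pi - x = ((N:ℝ) * Real.pi) * r := by
        rw [hrdef]; field_simp
      have hNt : (N:ℝ) * Real.tan z ≤ 4 * (N:ℝ)^2 / ((N:ℝ) * Real.pi - x) := by
        have h2d : 2 / d = 2 * (2 * (N:ℝ)) / ((N:ℝ) * Real.pi - x) := by
          rw [hdval, div_div_eq_mul_div]
        calc (N:ℝ) * Real.tan z ≤ (N:ℝ) * (2 / d) :=
              mul_le_mul_of_nonneg_left htanz hN0.le
          _ = 4 * (N:ℝ)^2 / ((N:ℝ) * Real.pi - x) := by rw [h2d]; ring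
      have hsq : ((N:ℝ) * Real.tan z) ^ 2 ≤ (4 * (N:ℝ)^2 / ((N:ℝ) * Real.pi - x)) ^ 2 :=
        pow_le_pow_left₀ (by positivity) hNt 2
      have hkey : (4 * (N:ℝ)^2 / ((N:ℝ) * Real.pi - x)) ^ 2 * r ^ (N - 1)
          = 16 * (N:ℝ)^2 / Real.pi ^ 2 * r ^ (N - 3) := by
        have hsplit : r ^ (N - 1) = r ^ (N - 3) * r ^ 2 := by
          rw [← pow_add]; congr 1; omega
        rw [hsplit, hNπx]
        field_simp
        ring
      have hhalfpow : r ^ (N - 3) ≤ (1/2 : ℝ) ^ (N - 3) :=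
        pow_le_pow_left₀ hr0.le hr2.le _
      have hexp8 : ((1:ℝ)/2) ^ (N - 3) ≤ 8 * Real.exp (-(x / (2 * Real.pi))) := by
        have hlog2 : Real.log 2 > 0.6931471803 := Real.log_two_gt_d9
        have h12 : ((1:ℝ)/2) = Real.exp (-(Real.log 2)) := by
          rw [Real.exp_neg, Real.exp_log (by norm_num)]; norm_num
        have h8 : Real.exp (3 * Real.log 2) = 8 := by
          rw [show (3:ℝ) * Real.log 2 = Real.log (2 ^ (3:ℕ)) by rw [Real.log_pow]; push_cast; ring]
          rw [Real.exp_log (by norm_num)]; norm_num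
        rw [h12, ← Real.exp_nat_mul, show (8:ℝ) = Real.exp (3 * Real.log 2) from h8.symm,
          ← Real.exp_add, Real.exp_le_exp]
        have hcast : ((N - 3 : ℕ):ℝ) = (N:ℝ) - 3 := by
          rw [Nat.cast_sub (by omega)]; norm_num
        rw [hcast]
        have hxπN : x / Real.pi ≤ (N:ℝ) := by
          rw [div_le_iff₀ hπ]; nlinarith
        have hx2π : x / (2 * Real.pi) = (x / Real.pi) / 2 := by ring
        rw [hx2π]
        nlinarith [div_pos hx0 hπ]
      have hE : (0:ℝ) < Real.exp (-(x / (2 * Real.pi))) := Real.exp_pos _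
      have hNx : 16 * (N:ℝ)^2 / Real.pi ^ 2 * 8 ≤ 512 / Real.pi ^ 4 * x ^ 2 := by
        rw [div_mul_eq_mul_div, div_mul_eq_mul_div, div_le_div_iff₀ (by positivity) (by positivity)]
        have hk2 : ((N:ℝ) * Real.pi) ^ 2 ≤ (2 * x) ^ 2 := by nlinarith [mul_pos hN0 hπ]
        have hk3 := mul_le_mul_of_nonneg_left hk2 (mul_pos hπ hπ).le
        nlinarith [hk3]
      calc ((N:ℝ) * Real.tan z) ^ 2 * r ^ (N - 1)
          ≤ (4 * (N:ℝ)^2 / ((N:ℝ) * Real.pi - x)) ^ 2 * r ^ (N - 1) :=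
            mul_le_mul_of_nonneg_right hsq (pow_nonneg hr0.le _)
        _ = 16 * (N:ℝ)^2 / Real.pi ^ 2 * r ^ (N - 3) := hkey
        _ ≤ 16 * (N:ℝ)^2 / Real.pi ^ 2 * ((1/2:ℝ) ^ (N - 3)) :=
            mul_le_mul_of_nonneg_left hhalfpow (by positivity)
        _ ≤ 16 * (N:ℝ)^2 / Real.pi ^ 2 * (8 * Real.exp (-(x / (2 * Real.pi)))) :=
            mul_le_mul_of_nonneg_left hexp8 (by positivity)
        _ = (16 * (N:ℝ)^2 / Real.pi ^ 2 * 8) * Real.exp (-(x / (2 * Real.pi))) := by ring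
        _ ≤ (512 / Real.pi ^ 4 * x ^ 2) * Real.exp (-(x / (2 * Real.pi))) :=
            mul_le_mul_of_nonneg_right hNx hE.le
        _ ≤ (1 + 512 / Real.pi ^ 4) * (x ^ 2 * Real.exp (-(x / (2 * Real.pi)))) := by
            nlinarith [mul_nonneg (sq_nonneg x) hE.le]

lemma cmm_bound_integrable :
    IntegrableOn (fun x : ℝ =>
      (1 + 512 / Real.pi ^ 4) * (x ^ 2 * Real.exp (-(x / (2 * Real.pi)))))
      (Set.Ioi 0) := by
  apply Integrable.const_mul
  have h := integrableOn_rpow_mul_exp_neg_mul_rpow (p := 1) (s := 2)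
    (b := 1 / (2 * Real.pi)) (by norm_num) one_pos (by positivity)
  refine h.congr_fun ?_ measurableSet_Ioi
  intro x hx
  show x ^ (2:ℝ) * Real.exp (-(1 / (2 * Real.pi)) * x ^ (1:ℝ))
      = x ^ 2 * Real.exp (-(x / (2 * Real.pi)))
  rw [Real.rpow_one, show (2:ℝ) = ((2:ℕ):ℝ) by norm_num, Real.rpow_natCast]
  congr 1
  ring

lemma cmm_limit_integral :
    ∫ x in Set.Ioi (0:ℝ), x ^ 2 / 4 * Real.exp (-(x / Real.pi)) = Real.pi ^ 3 / 2 := by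
  have hπ := Real.pi_pos
  have h := Real.integral_rpow_mul_exp_neg_mul_Ioi (a := 3) (r := 1 / Real.pi)
    (by norm_num) (by positivity)
  have hcongr : ∫ x in Set.Ioi (0:ℝ), x ^ 2 / 4 * Real.exp (-(x / Real.pi))
      = ∫ x in Set.Ioi (0:ℝ), (1/4) * (x ^ ((3:ℝ)-1) * Real.exp (-(1 / Real.pi * x))) := by
    apply setIntegral_congr_fun measurableSet_Ioi
    intro x hx
    show x ^ 2 / 4 * Real.exp (-(x / Real.pi))
        = 1/4 * (x ^ ((3:ℝ)-1) * Real.exp (-(1 / Real.pi * x)))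
    rw [show (3:ℝ)-1 = ((2:ℕ):ℝ) by norm_num, Real.rpow_natCast,
      show -(1 / Real.pi * x) = -(x / Real.pi) by ring]
    ring
  rw [hcongr, MeasureTheory.integral_const_mul, h, one_div_one_div]
  have hG : Real.Gamma 3 = 2 := by
    rw [show (3:ℝ) = ((2:ℕ):ℝ)+1 by norm_num, Real.Gamma_nat_eq_factorial]; norm_num
  have hπ3 : Real.pi ^ (3:ℝ) = Real.pi ^ (3:ℕ) := by
    rw [← Real.rpow_natCast]; norm_num
  rw [hG, hπ3]
  ring

theorem expected_square_CMM_error_asymptotic (w : ℝ) (hw : 0 < w) :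
    Tendsto (fun N : ℕ => (N : ℝ) *
        ((4 * w ^ 2 * (N : ℝ)) / (9 * Real.pi ^ 2) *
          ∫ t in (0:ℝ)..Real.pi,
            Real.tan (t / 2) ^ 2 * ((N : ℝ) / Real.pi) * (1 - t / Real.pi) ^ (N - 1)))
      atTop (nhds (2 * w ^ 2 / 9)) := by
  have hπ := Real.pi_pos
  have hmeas : ∀ n : ℕ, AEStronglyMeasurable (cmmF (n + 3))
      (volume.restrict (Set.Ioi (0:ℝ))) := by
    intro n
    refine (Measurable.indicator ?_ measurableSet_Ioc).aestronglyMeasurable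
    have h1 : Measurable fun x : ℝ => x / (2 * ((n + 3 : ℕ) : ℝ)) :=
      measurable_id.div_const _
    have htan : Measurable fun x : ℝ => Real.tan (x / (2 * ((n + 3 : ℕ) : ℝ))) := by
      have h2 : (fun x : ℝ => Real.tan (x / (2 * ((n + 3 : ℕ) : ℝ))))
          = fun x => Real.sin (x / (2 * ((n + 3 : ℕ) : ℝ))) / Real.cos (x / (2 * ((n + 3 : ℕ) : ℝ))) :=
        funext fun x => Real.tan_eq_sin_div_cos _
      rw [h2]
      exact (Real.continuous_sin.measurable.comp h1).div (Real.continuous_cos.measurable.comp h1)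
    exact ((measurable_const.mul htan).pow_const 2).mul
      ((measurable_const.sub (measurable_id.div_const _)).pow_const _)
  have hbd : ∀ n : ℕ, ∀ᵐ x ∂(volume.restrict (Set.Ioi (0:ℝ))),
      ‖cmmF (n + 3) x‖ ≤ (1 + 512 / Real.pi ^ 4) * (x ^ 2 * Real.exp (-(x / (2 * Real.pi)))) :=
    fun n => MeasureTheory.ae_of_all _ (cmm_bound (by omega))
  have hlim : ∀ᵐ x ∂(volume.restrict (Set.Ioi (0:ℝ))),
      Tendsto (fun n : ℕ => cmmF (n + 3) x) atTop
        (nhds (x ^ 2 / 4 * Real.exp (-(x / Real.pi)))) := by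
    rw [MeasureTheory.ae_restrict_iff' measurableSet_Ioi]
    refine MeasureTheory.ae_of_all _ (fun x hx => ?_)
    exact (cmm_tendsto hx).comp (tendsto_add_atTop_nat 3)
  have hDCT := MeasureTheory.tendsto_integral_of_dominated_convergence
    (μ := volume.restrict (Set.Ioi (0:ℝ)))
    (F := fun n => cmmF (n + 3)) (f := fun x => x ^ 2 / 4 * Real.exp (-(x / Real.pi)))
    _ hmeas cmm_bound_integrable hbd hlim
  rw [cmm_limit_integral] at hDCT
  have hmul := hDCT.const_mul (4 * w ^ 2 / (9 * Real.pi ^ 3))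
  have hval : 4 * w ^ 2 / (9 * Real.pi ^ 3) * (Real.pi ^ 3 / 2) = 2 * w ^ 2 / 9 := by
    field_simp
    ring
  rw [hval] at hmul
  have hshift : Tendsto (fun n : ℕ => ((n + 3 : ℕ) : ℝ) *
      ((4 * w ^ 2 * ((n + 3 : ℕ) : ℝ)) / (9 * Real.pi ^ 2) *
        ∫ t in (0:ℝ)..Real.pi,
          Real.tan (t / 2) ^ 2 * (((n + 3 : ℕ) : ℝ) / Real.pi) * (1 - t / Real.pi) ^ ((n + 3) - 1)))
      atTop (nhds (2 * w ^ 2 / 9)) := by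
    refine hmul.congr (fun n => ?_)
    exact (cmm_eq w (n + 3) (by omega)).symm
  exact (tendsto_add_atTop_iff_nat 3).mp hshift
end
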